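/- Let T be an observation table, (≡,f) a merging map on T, M its resulting transducer, and (u,a) a muted pair of (≡,f). Then for every v∈P_T with T(v)∈Γ*, the run of v in M from the initial state q_ε does not use the transition q_u→^{a|ε}q_{ua}; that is, writing v=v_pref·a·v_suf with v_pref reaching the state q_u is impossible. -/

import Mathlib

attribute [local instance] Classical.propDecidable

/-- A subsequential string transducer with input alphabet `σ` and output alphabet `γ`. -/
structure Transducer (σ : Type) (γ : Type) : Type 1 where
  Q : Type
  fin : Finite Q
  q0 : Q
  w0 : List γ
  δ : Q → σ → Option (Q × List γ)
  δF : Q → Option (List γ)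

namespace Transducer

variable {σ γ : Type}

/-- The run relation `q →*^{u|w} q'`, as a function: from state `q`, reading `u`,
we reach the returned state producing the returned (concatenated) output. -/
def runFrom (M : Transducer σ γ) : M.Q → List σ → Option (M.Q × List γ)
  | q, [] => some (q, [])
  | q, a :: u =>
    (M.δ q a).bind fun x =>
      (M.runFrom x.1 u).map fun y => (y.1, x.2 ++ y.2)

/-- The semantics `⟦M⟧` of a transducer, as a partial function `Σ* → Γ*`. -/
def sem (M : Transducer σ γ) (u : List σ) : Option (List γ) :=
  (M.runFrom M.q0 u).bind fun x => (M.δF x.1).map fun w' => M.w0 ++ x.2 ++ w'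

/-- The number of states `|M|` of a transducer. -/
noncomputable def size (M : Transducer σ γ) : ℕ := Nat.card M.Q

/-- The run of `v` in `M` (from the initial state) uses the transition out of
state `q` reading letter `a`. -/
def usesTransition (M : Transducer σ γ) (q : M.Q) (a : σ) (v : List σ) : Prop :=
  ∃ (vp vs : List σ) (w : List γ), v = vp ++ a :: vs ∧ M.runFrom M.q0 vp = some (q, w)

/-- Modify the transition function of `M` at `(q, a)`: replace it by `o`
(`o = none` deletes the transition, `o = some (q', w)` makes it `q →^{a|w} q'`). -/
noncomputable def modifyDelta (M : Transducer σ γ) (q : M.Q) (a : σ)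
    (o : Option (M.Q × List γ)) : Transducer σ γ :=
  { M with δ := fun p b => if p = q ∧ b = a then o else M.δ p b }

/-- The product transducer `M × A` of a transducer and a DFA. -/
noncomputable def prodDFA {Q : Type} [Finite Q] (M : Transducer σ γ) (A : DFA σ Q) :
    Transducer σ γ where
  Q := M.Q × Q
  fin := by have := M.fin; infer_instance
  q0 := (M.q0, A.start)
  w0 := M.w0
  δ := fun qp a => (M.δ qp.1 a).map fun x => ((x.1, A.step qp.2 a), x.2)
  δF := fun qp => if qp.2 ∈ A.accept then M.δF qp.1 else none

end Transducer

/-- A table entry: a word of `Γ*`, the wildcard `#`, or `⊥`. -/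
inductive TVal (γ : Type) : Type where
  | word : List γ → TVal γ
  | hash : TVal γ
  | bot  : TVal γ

/-- An observation table for a target partial function `τ` with regular domain
upper bound `Up`, based on a finite prefix-closed set `P` and a finite
suffix-closed set `S` (both containing `ε`). -/
structure ObsTable (σ γ : Type) where
  P : Finset (List σ)
  S : Finset (List σ)
  eps_mem_P : ([] : List σ) ∈ P
  eps_mem_S : ([] : List σ) ∈ S
  prefixClosed : ∀ u ∈ P, ∀ v : List σ, v <+: u → v ∈ P
  suffixClosed : ∀ u ∈ S, ∀ v : List σ, v <:+ u → v ∈ S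
  Up : Language σ
  regular : ∃ (n : ℕ) (A : DFA σ (Fin n)), A.accepts = Up
  τ : List σ → Option (List γ)
  dom_subset : ∀ u : List σ, (τ u).isSome → u ∈ Up

namespace ObsTable

variable {σ γ : Type}

/-- The set `P ∪ PΣ`. -/
def rowIdx (T : ObsTable σ γ) : Set (List σ) :=
  ↑T.P ∪ {x | ∃ p ∈ T.P, ∃ a : σ, x = p ++ [a]}

/-- The set `(P ∪ PΣ)·S` on which the table is defined. -/
def rows (T : ObsTable σ γ) : Set (List σ) :=
  {x | ∃ u ∈ T.rowIdx, ∃ v ∈ T.S, x = u ++ v}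

/-- The table entry at `x`: `#` if `x ∉ Up`, `⊥` if `x ∈ Up ∖ dom τ`, and `τ x` otherwise. -/
noncomputable def val (T : ObsTable σ γ) (x : List σ) : TVal γ :=
  if x ∈ T.Up then
    match T.τ x with
    | some w => TVal.word w
    | none => TVal.bot
  else TVal.hash

/-- `P_T`: the set of prefixes of elements of `(P ∪ PΣ)·S`. -/
def PT (T : ObsTable σ γ) : Set (List σ) := {u | ∃ x ∈ T.rows, u <+: x}

/-- `P_Γ`: those `u ∈ P_T` having an extension whose table entry is a word of `Γ*`. -/
def PGamma (T : ObsTable σ γ) : Set (List σ) :=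
  {u | u ∈ T.PT ∧ ∃ v : List σ, u ++ v ∈ T.rows ∧ ∃ w, T.val (u ++ v) = TVal.word w}

/-- A transducer `M` is compatible with the table `T`. -/
def Compatible (T : ObsTable σ γ) (M : Transducer σ γ) : Prop :=
  ∀ x ∈ T.rows,
    (∀ w, T.val x = TVal.word w → M.sem x = some w) ∧
    (T.val x = TVal.bot → M.sem x = none)

lemma rowIdx_finite [Finite σ] (T : ObsTable σ γ) : T.rowIdx.Finite := by
  refine Set.Finite.union T.P.finite_toSet ?_
  have h : {x : List σ | ∃ p ∈ T.P, ∃ a : σ, x = p ++ [a]}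
      ⊆ (fun pa : List σ × σ => pa.1 ++ [pa.2]) '' ((↑T.P : Set (List σ)) ×ˢ (Set.univ : Set σ)) := by
    rintro x ⟨p, hp, a, rfl⟩
    exact ⟨(p, a), ⟨hp, trivial⟩, rfl⟩
  exact ((T.P.finite_toSet.prod Set.finite_univ).image _).subset h

lemma rows_finite [Finite σ] (T : ObsTable σ γ) : T.rows.Finite := by
  have h : T.rows ⊆ (fun uv : List σ × List σ => uv.1 ++ uv.2) '' (T.rowIdx ×ˢ (↑T.S : Set (List σ))) := by
    rintro x ⟨u, hu, v, hv, rfl⟩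
    exact ⟨(u, v), ⟨hu, hv⟩, rfl⟩
  exact (((rowIdx_finite T).prod T.S.finite_toSet).image _).subset h

lemma PT_finite [Finite σ] (T : ObsTable σ γ) : T.PT.Finite := by
  have h : T.PT ⊆ ⋃ x ∈ T.rows, {u : List σ | u ∈ x.inits} := by
    rintro u ⟨x, hx, hpre⟩
    exact Set.mem_biUnion hx (by simpa [List.mem_inits] using hpre)
  refine (Set.Finite.biUnion (rows_finite T) fun x _ => ?_).subset h
  exact x.inits.finite_toSet

end ObsTable

/-- A merging map `(≡, f)` on an observation table `T`. -/
structure MergingMap {σ γ : Type} (T : ObsTable σ γ) where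
  rel : List σ → List σ → Prop
  f : List σ → Option (List γ)
  rel_mem : ∀ u v : List σ, rel u v → u ∈ T.PT ∧ v ∈ T.PT
  rel_refl : ∀ u ∈ T.PT, rel u u
  rel_symm : ∀ {u v : List σ}, rel u v → rel v u
  rel_trans : ∀ {u v w : List σ}, rel u v → rel v w → rel u w
  f_mem : ∀ u : List σ, (f u).isSome → u ∈ T.PT
  cond1 : ∀ u v : List σ, f u = none → rel u v → f v = none
  cond2 : ∀ (u v : List σ) (w : List γ), u ∈ T.PT → u ++ v ∈ T.rows →
    T.val (u ++ v) = TVal.word w → ∃ x, f u = some x ∧ x <+: w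
  cond3 : ∀ (u : List σ) (a : σ) (w : List γ), f (u ++ [a]) = some w →
    ∃ x, f u = some x ∧ x <+: w
  cond4 : ∀ (u u' : List σ) (a : σ) (wu : List γ), f u = some wu → rel u u' →
    u ++ [a] ∈ T.PT → u' ++ [a] ∈ T.PT →
    rel (u ++ [a]) (u' ++ [a]) ∧
    ∀ wua, f (u ++ [a]) = some wua →
      ∃ (wu' x : List γ), f u' = some wu' ∧ wua = wu ++ x ∧ f (u' ++ [a]) = some (wu' ++ x)
  cond5 : ∀ (u u' : List σ) (w : List γ), u ∈ T.rows → T.val u = TVal.word w → rel u u' →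
    (u' ∈ T.rows → T.val u' ≠ TVal.bot) ∧
    ∀ w', u' ∈ T.rows → T.val u' = TVal.word w' →
      ∃ (x fu fu' : List γ), f u = some fu ∧ f u' = some fu' ∧ w = fu ++ x ∧ w' = fu' ++ x
  cond6 : ∀ (u : List σ) (a : σ), (f (u ++ [a])).isSome →
    (¬ ∃ v, rel u v ∧ v ++ [a] ∈ T.PGamma) → f (u ++ [a]) = f u

namespace MergingMap

variable {σ γ : Type} {T : ObsTable σ γ}

/-- The `≡`-class of `u`. -/
def cls (m : MergingMap T) (u : List σ) : Set (List σ) := {v | m.rel u v}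

/-- The set of `≡`-classes meeting `dom f`. -/
def classes (m : MergingMap T) : Set (Set (List σ)) :=
  {C | ∃ u : List σ, (m.f u).isSome ∧ C = m.cls u}

/-- The size of a merging map: the number of `≡`-classes meeting `dom f`. -/
noncomputable def size (m : MergingMap T) : ℕ := m.classes.ncard

lemma cls_mem_classes (m : MergingMap T) {u : List σ} (h : (m.f u).isSome) :
    m.cls u ∈ m.classes := ⟨u, h, rfl⟩

lemma classes_finite [Finite σ] (m : MergingMap T) : m.classes.Finite := by
  have h : m.classes ⊆ m.cls '' T.PT := by
    rintro C ⟨u, hu, rfl⟩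
    exact ⟨u, m.f_mem u hu, rfl⟩
  exact ((T.PT_finite).image _).subset h

/-- A muted pair `(u, a)` of a merging map. -/
def Muted (m : MergingMap T) (u : List σ) (a : σ) : Prop :=
  (m.f u).isSome ∧ (m.f (u ++ [a])).isSome ∧
    ¬ ∃ v, m.rel u v ∧ v ++ [a] ∈ T.PGamma

/-- An open end `(u, a)` of a merging map. -/
def OpenEnd (m : MergingMap T) (u : List σ) (a : σ) : Prop :=
  u ∈ T.PT ∧ ¬ ∃ v, m.rel u v ∧ v ++ [a] ∈ T.PT

/-- The transducer resulting from a merging map (assuming `f ε` is defined,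
so that the initial state exists). -/
noncomputable def resulting [Finite σ] (m : MergingMap T) (h0 : (m.f []).isSome) :
    Transducer σ γ where
  Q := {C : Set (List σ) // C ∈ m.classes}
  fin := m.classes_finite.to_subtype
  q0 := ⟨m.cls [], m.cls_mem_classes h0⟩
  w0 := (m.f []).get h0
  δ := fun q a =>
    if h : ∃ u : List σ, (m.f u).isSome ∧ (m.f (u ++ [a])).isSome ∧ q.1 = m.cls u then
      some (⟨m.cls (h.choose ++ [a]), m.cls_mem_classes h.choose_spec.2.1⟩,
        ((m.f (h.choose ++ [a])).get h.choose_spec.2.1).drop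
          ((m.f h.choose).get h.choose_spec.1).length)
    else none
  δF := fun q =>
    if h : ∃ u : List σ, (m.f u).isSome ∧ q.1 = m.cls u ∧ u ∈ T.rows ∧
        ∃ w, T.val u = TVal.word w then
      some (h.choose_spec.2.2.2.choose.drop ((m.f h.choose).get h.choose_spec.1).length)
    else none

/-- The state `q_u` of the resulting transducer associated with `u ∈ dom f`. -/
noncomputable def state [Finite σ] (m : MergingMap T) (h0 : (m.f []).isSome)
    {u : List σ} (h : (m.f u).isSome) : (m.resulting h0).Q :=
  ⟨m.cls u, m.cls_mem_classes h⟩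

/-- An open completion of a merging map, determined by a choice `g` of added
transitions (which, when used, must only be added at open ends, with output `ε`). -/
noncomputable def openCompletion [Finite σ] (m : MergingMap T) (h0 : (m.f []).isSome)
    (g : (m.resulting h0).Q → σ → Option ((m.resulting h0).Q)) : Transducer σ γ :=
  { m.resulting h0 with
    δ := fun q a =>
      match (m.resulting h0).δ q a with
      | some x => some x
      | none => (g q a).map fun q' => (q', ([] : List γ)) }

/-- The choice `g` of added transitions only adds transitions at open ends. -/
def ValidOpenChoice [Finite σ] (m : MergingMap T) (h0 : (m.f []).isSome)
    (g : (m.resulting h0).Q → σ → Option ((m.resulting h0).Q)) : Prop :=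
  ∀ (q : (m.resulting h0).Q) (a : σ), (g q a).isSome →
    ∃ u : List σ, q.1 = m.cls u ∧ m.OpenEnd u a

/-- The run of `x` in the open completion uses a muted or an open transition. -/
def usesMutedOrOpen [Finite σ] (m : MergingMap T) (h0 : (m.f []).isSome)
    (g : (m.resulting h0).Q → σ → Option ((m.resulting h0).Q)) (x : List σ) : Prop :=
  ∃ (vp : List σ) (a : σ) (vs : List σ) (q : (m.resulting h0).Q) (w : List γ),
    x = vp ++ a :: vs ∧
    (m.openCompletion h0 g).runFrom (m.openCompletion h0 g).q0 vp = some (q, w) ∧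
    ((∃ u, q.1 = m.cls u ∧ m.Muted u a) ∨ (m.resulting h0).δ q a = none)

end MergingMap

/-- The equivalence on `P_T` induced by a transducer: two words are related when
they reach the same state of `M` (or both fail to have a run). -/
def inducedRel {σ γ : Type} (M : Transducer σ γ) (T : ObsTable σ γ) (u v : List σ) : Prop :=
  u ∈ T.PT ∧ v ∈ T.PT ∧
    (M.runFrom M.q0 u).map Prod.fst = (M.runFrom M.q0 v).map Prod.fst

/-- Helper for the induced partial output function: walk through the word,
appending the transition output only when the step leads into `P_Γ` for
some equivalent word. -/
noncomputable def goF {σ γ : Type} (M : Transducer σ γ) (T : ObsTable σ γ) :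
    M.Q → List γ → List σ → Option (List γ)
  | _, acc, [] => some acc
  | q, acc, a :: rest =>
    (M.δ q a).bind fun x =>
      goF M T x.1
        (if ∃ v ∈ T.PT, (M.runFrom M.q0 v).map Prod.fst = some q ∧ v ++ [a] ∈ T.PGamma
          then acc ++ x.2 else acc) rest

/-- The partial output function induced by a transducer on `P_T`. -/
noncomputable def inducedF {σ γ : Type} (M : Transducer σ γ) (T : ObsTable σ γ)
    (u : List σ) : Option (List γ) :=
  if u ∈ T.PT then goF M T M.q0 M.w0 u else none

/-! The states of the resulting transducer are `≡`-classes, and condition (4) makes the transition on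
`b` send the class of any `p` to the class of `p·b`, whichever representative it was built from. Hence
reading a word `p ∈ P_T` from `q_ε` ends in the class of `p` itself. If `v_pref` reached `q_u`, then
`u ≡ v_pref`; but `v_pref·a ∈ P_Γ`, witnessed by `T(v) ∈ Γ*`, so `(u, a)` would not be muted. -/

namespace ObsTable

variable {σ γ : Type} {T : ObsTable σ γ}

lemma mem_PT_of_prefix {x y : List σ} (hx : x ∈ T.PT) (hyx : y <+: x) : y ∈ T.PT :=
  let ⟨z, hz, hxz⟩ := hx
  ⟨z, hz, hyx.trans hxz⟩

lemma mem_PT_of_mem_rows {x : List σ} (hx : x ∈ T.rows) : x ∈ T.PT :=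
  ⟨x, hx, List.prefix_refl x⟩

lemma mem_PGamma_of_prefix {x y : List σ} {w : List γ} (hxy : x ++ y ∈ T.rows)
    (hw : T.val (x ++ y) = TVal.word w) : x ∈ T.PGamma :=
  ⟨mem_PT_of_prefix (mem_PT_of_mem_rows hxy) (List.prefix_append x y), y, hxy, w, hw⟩

end ObsTable

namespace MergingMap

variable {σ γ : Type} {T : ObsTable σ γ} (m : MergingMap T)

lemma cls_eq_of_rel {u v : List σ} (h : m.rel u v) : m.cls u = m.cls v :=
  Set.ext fun _ => ⟨m.rel_trans (m.rel_symm h), m.rel_trans h⟩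

lemma rel_of_cls_eq {u v : List σ} (h : m.cls u = m.cls v) (hv : v ∈ T.PT) : m.rel u v :=
  (h ▸ m.rel_refl v hv : v ∈ m.cls u)

variable [Finite σ] (h0 : (m.f []).isSome)

lemma resulting_δ_eq_some {q q' : (m.resulting h0).Q} {b : σ} {w : List γ}
    (h : (m.resulting h0).δ q b = some (q', w)) :
    ∃ u, (m.f u).isSome ∧ (m.f (u ++ [b])).isSome ∧ q.1 = m.cls u ∧ q'.1 = m.cls (u ++ [b]) := by
  simp only [resulting] at h
  split_ifs at h with hu
  obtain ⟨rfl, -⟩ := Prod.mk.inj (Option.some.inj h)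
  exact ⟨hu.choose, hu.choose_spec.1, hu.choose_spec.2.1, hu.choose_spec.2.2, rfl⟩

lemma resulting_δ_cls {q q' : (m.resulting h0).Q} {p : List σ} {b : σ} {w : List γ}
    (hq : q.1 = m.cls p) (hpb : p ++ [b] ∈ T.PT) (h : (m.resulting h0).δ q b = some (q', w)) :
    q'.1 = m.cls (p ++ [b]) := by
  obtain ⟨u, hfu, hfub, hqu, hq'⟩ := m.resulting_δ_eq_some h0 h
  have hp : p ∈ T.PT := ObsTable.mem_PT_of_prefix hpb (List.prefix_append p [b])
  have hup : m.rel u p := m.rel_of_cls_eq (hqu ▸ hq) hp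
  obtain ⟨fu, hfu⟩ := Option.isSome_iff_exists.mp hfu
  have hub : u ++ [b] ∈ T.PT := m.f_mem _ hfub
  rw [hq', m.cls_eq_of_rel (m.cond4 u p b fu hfu hup hub hpb).1]

lemma resulting_runFrom_cls :
    ∀ {x p : List σ} {q q' : (m.resulting h0).Q} {w : List γ}, p ++ x ∈ T.PT →
      q.1 = m.cls p → (m.resulting h0).runFrom q x = some (q', w) → q'.1 = m.cls (p ++ x)
  | [], p, q, q', w, _, hq, h => by
    simp only [Transducer.runFrom, Option.some.injEq, Prod.mk.injEq] at h
    simpa [← h.1] using hq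
  | b :: x, p, q, q', w, hpx, hq, h => by
    simp only [Transducer.runFrom, Option.bind_eq_some_iff, Option.map_eq_some_iff] at h
    obtain ⟨⟨r, wr⟩, hδ, ⟨r', wr'⟩, hrun, hr'⟩ := h
    obtain rfl : r' = q' := congrArg Prod.fst hr'
    have hpbx : p ++ [b] ++ x ∈ T.PT := by simpa using hpx
    have hr := m.resulting_δ_cls h0 hq (ObsTable.mem_PT_of_prefix hpbx (List.prefix_append _ _)) hδ
    simpa using resulting_runFrom_cls hpbx hr hrun

lemma resulting_runFrom_q0_cls {x : List σ} {q : (m.resulting h0).Q} {w : List γ}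
    (hx : x ∈ T.PT) (h : (m.resulting h0).runFrom (m.resulting h0).q0 x = some (q, w)) :
    q.1 = m.cls x :=
  m.resulting_runFrom_cls h0 (p := []) hx rfl h

end MergingMap

theorem muted_transition_not_used_general {σ γ : Type} [Finite σ]
    (T : ObsTable σ γ) (m : MergingMap T) (h0 : (m.f []).isSome)
    (u : List σ) (a : σ) (hma : m.Muted u a)
    (v : List σ) (hvrow : v ∈ T.rows)
    (w : List γ) (hvw : T.val v = TVal.word w) :
    ∀ (vp vs : List σ), v = vp ++ a :: vs →
      ∀ (q : (m.resulting h0).Q) (wq : List γ),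
        (m.resulting h0).runFrom (m.resulting h0).q0 vp = some (q, wq) →
        q.1 ≠ m.cls u := by
  rintro vp vs rfl q wq hrun hqu
  have hsplit : vp ++ a :: vs = vp ++ [a] ++ vs := by simp
  have hvpa : vp ++ [a] ∈ T.PGamma :=
    ObsTable.mem_PGamma_of_prefix (hsplit ▸ hvrow) (hsplit ▸ hvw)
  have hvp : vp ∈ T.PT :=
    ObsTable.mem_PT_of_prefix hvpa.1 (List.prefix_append vp [a])
  have hq := m.resulting_runFrom_q0_cls h0 hvp hrun
  exact hma.2.2 ⟨vp, m.rel_of_cls_eq (hqu ▸ hq) hvp, hvpa⟩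

/-- A muted transition `q_u →^{a|ε} q_{ua}` is never used by the
run of any `v ∈ P_T` with `T(v) ∈ Γ*`: no decomposition `v = v_pref · a · v_suf`
with `v_pref` reaching the state `q_u` is possible. -/
theorem muted_transition_not_used {σ γ : Type} [Finite σ] [Finite γ]
    (T : ObsTable σ γ) (m : MergingMap T) (h0 : (m.f []).isSome)
    (u : List σ) (a : σ) (hma : m.Muted u a)
    (v : List σ) (hvPT : v ∈ T.PT) (hvrow : v ∈ T.rows)
    (w : List γ) (hvw : T.val v = TVal.word w) :
    ∀ (vp vs : List σ), v = vp ++ a :: vs →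
      ∀ (q : (m.resulting h0).Q) (wq : List γ),
        (m.resulting h0).runFrom (m.resulting h0).q0 vp = some (q, wq) →
        q.1 ≠ m.cls u :=
  muted_transition_not_used_general T m h0 u a hma v hvrow w hvw
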